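/- Suppose ‖ε‖_n > 0, ‖ε̂‖_n ≠ 0, and (λ⁰/λ)(1 + 2f) < 1. Then 1 + f ≥ ‖ε̂‖_n/‖ε‖_n ≥ (1 − (λ⁰/λ)(1 + 2f))/(f + 2) > 0. -/

import Mathlib

open scoped BigOperators

/-- The normalized norm `‖a‖_n = sqrt( (∑ a_j^2) / n )`. -/
noncomputable def normN {n : ℕ} (a : Fin n → ℝ) : ℝ :=
  Real.sqrt ((∑ j, a j ^ 2) / n)

/-- `Ω` is a norm on `ℝ^p`. -/
def IsNorm {p : ℕ} (Ω : (Fin p → ℝ) → ℝ) : Prop :=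
  (∀ x y, Ω (x + y) ≤ Ω x + Ω y) ∧
  (∀ (c : ℝ) (x), Ω (c • x) = |c| * Ω x) ∧
  (∀ x, Ω x = 0 → x = 0)

/-- The dual norm `Ω*(x) = max_{Ω(z) ≤ 1} zᵀx`. -/
noncomputable def dualNorm {p : ℕ} (Ω : (Fin p → ℝ) → ℝ) (x : Fin p → ℝ) : ℝ :=
  sSup {r | ∃ z, Ω z ≤ 1 ∧ r = ∑ i, z i * x i}

/-- `β_S` : the restriction of `β` to `S`, extended by zero off `S`. -/
def restrict {p : ℕ} (S : Finset (Fin p)) (β : Fin p → ℝ) : Fin p → ℝ :=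
  fun i => if i ∈ S then β i else 0

/-- `Ω'` is a norm on the coordinates in `Sᶜ` (definiteness is required only for
vectors vanishing on `S`). -/
def IsNormOn {p : ℕ} (S : Finset (Fin p)) (Ω' : (Fin p → ℝ) → ℝ) : Prop :=
  (∀ x y, Ω' (x + y) ≤ Ω' x + Ω' y) ∧
  (∀ (c : ℝ) (x), Ω' (c • x) = |c| * Ω' x) ∧
  (∀ x, (∀ i ∈ S, x i = 0) → Ω' x = 0 → x = 0)

/-- `Ω` is weakly decomposable for the (allowed) set `S`, with associated norm `Ωc`
on the coordinates in `Sᶜ`. -/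
def WeaklyDecomposable {p : ℕ} (Ω : (Fin p → ℝ) → ℝ) (S : Finset (Fin p))
    (Ωc : (Fin p → ℝ) → ℝ) : Prop :=
  IsNorm Ω ∧ IsNormOn S Ωc ∧
  ∀ β : Fin p → ℝ, Ω (restrict S β) + Ωc (restrict Sᶜ β) ≤ Ω β

/-- The `Ω`-eigenvalue `δ_Ω(L,S)`. -/
noncomputable def omegaEigen {n p : ℕ} (X : Matrix (Fin n) (Fin p) ℝ)
    (Ω Ωc : (Fin p → ℝ) → ℝ) (S : Finset (Fin p)) (L : ℝ) : ℝ :=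
  sInf {r | ∃ β : Fin p → ℝ, Ω (restrict S β) = 1 ∧ Ωc (restrict Sᶜ β) ≤ L ∧
    r = normN (X.mulVec (restrict S β) - X.mulVec (restrict Sᶜ β))}

/-- The `Ω`-effective sparsity `Γ_Ω²(L,S) = 1/δ_Ω²(L,S)`. -/
noncomputable def effSparsity {n p : ℕ} (X : Matrix (Fin n) (Fin p) ℝ)
    (Ω Ωc : (Fin p → ℝ) → ℝ) (S : Finset (Fin p)) (L : ℝ) : ℝ :=
  1 / (omegaEigen X Ω Ωc S L) ^ 2

/-!
Taking `β = β⁰` in the minimality of `β̂` gives the basic inequality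
`‖ε̂‖_n + λΩ(β̂) ≤ ‖ε‖_n + λΩ(β⁰)`, hence the upper bound `‖ε̂‖_n ≤ (1 + f)‖ε‖_n`.
For the lower bound split `n‖ε‖_n² = εᵀε̂ + εᵀX(β̂ - β⁰)` and bound the two terms by
Cauchy–Schwarz and by the dual-norm inequality: `‖ε‖_n ≤ ‖ε̂‖_n + λ⁰Ω(β̂ - β⁰)`.
The triangle inequality and the basic inequality give
`λΩ(β̂ - β⁰) ≤ ‖ε‖_n - ‖ε̂‖_n + 2λΩ(β⁰)`, so `‖ε‖_n (1 - (λ⁰/λ)(1 + 2f)) ≤ ‖ε̂‖_n`.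
-/

open Matrix

/-- `ℝ^p` as a type synonym, to carry the normed-space structure given by `Ω`. -/
def NormedBy {p : ℕ} (_Ω : (Fin p → ℝ) → ℝ) : Type := Fin p → ℝ

namespace IsNorm

variable {p : ℕ} {Ω : (Fin p → ℝ) → ℝ}

lemma map_zero (hΩ : IsNorm Ω) : Ω 0 = 0 := by
  simpa using hΩ.2.1 0 0

lemma map_neg (hΩ : IsNorm Ω) (x : Fin p → ℝ) : Ω (-x) = Ω x := by
  simpa using hΩ.2.1 (-1) x

lemma nonneg (hΩ : IsNorm Ω) (x : Fin p → ℝ) : 0 ≤ Ω x := by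
  have h := hΩ.1 x (-x)
  rw [add_neg_cancel, hΩ.map_zero, hΩ.map_neg] at h
  linarith

lemma map_sub_le (hΩ : IsNorm Ω) (x y : Fin p → ℝ) : Ω (x - y) ≤ Ω x + Ω y := by
  simpa [sub_eq_add_neg, hΩ.map_neg] using hΩ.1 x (-y)

/-- Finite dimensionality enters here, through the continuity of linear maps on
finite-dimensional normed spaces. -/
lemma exists_dotProduct_le (hΩ : IsNorm Ω) (x : Fin p → ℝ) :
    ∃ C, ∀ z, z ⬝ᵥ x ≤ C * Ω z := by
  let _ : AddCommGroup (NormedBy Ω) := inferInstanceAs (AddCommGroup (Fin p → ℝ))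
  let _ : Module ℝ (NormedBy Ω) := inferInstanceAs (Module ℝ (Fin p → ℝ))
  let _ : NormedAddCommGroup (NormedBy Ω) := AddGroupNorm.toNormedAddCommGroup
    { toFun := Ω
      map_zero' := hΩ.map_zero
      add_le' := hΩ.1
      neg' := hΩ.map_neg
      eq_zero_of_map_eq_zero' := hΩ.2.2 }
  let _ : NormedSpace ℝ (NormedBy Ω) := ⟨fun c z => (hΩ.2.1 c z).le⟩
  have : FiniteDimensional ℝ (NormedBy Ω) :=
    inferInstanceAs (FiniteDimensional ℝ (Fin p → ℝ))
  let φ : NormedBy Ω →ₗ[ℝ] ℝ :=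
    { toFun := fun z => (z : Fin p → ℝ) ⬝ᵥ x
      map_add' := fun a b => add_dotProduct a b x
      map_smul' := fun c a => smul_dotProduct c a x }
  exact ⟨‖φ.toContinuousLinearMap‖, fun z =>
    (le_abs_self _).trans (φ.toContinuousLinearMap.le_opNorm (z : NormedBy Ω))⟩

end IsNorm

section dualNorm

variable {p : ℕ} {Ω : (Fin p → ℝ) → ℝ}

lemma dualNorm_bddAbove (hΩ : IsNorm Ω) (x : Fin p → ℝ) :
    BddAbove {r | ∃ z, Ω z ≤ 1 ∧ r = ∑ i, z i * x i} := by
  obtain ⟨C, hC⟩ := hΩ.exists_dotProduct_le x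
  refine ⟨max C 0, ?_⟩
  rintro _ ⟨z, hz, rfl⟩
  calc z ⬝ᵥ x ≤ C * Ω z := hC z
    _ ≤ max C 0 * Ω z := mul_le_mul_of_nonneg_right (le_max_left _ _) (hΩ.nonneg z)
    _ ≤ max C 0 := mul_le_of_le_one_right (le_max_right _ _) hz

lemma dualNorm_nonneg (hΩ : IsNorm Ω) (x : Fin p → ℝ) : 0 ≤ dualNorm Ω x :=
  le_csSup (dualNorm_bddAbove hΩ x) ⟨0, by simp [hΩ.map_zero]⟩

lemma dotProduct_le_dualNorm_mul (hΩ : IsNorm Ω) (x z : Fin p → ℝ) :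
    z ⬝ᵥ x ≤ dualNorm Ω x * Ω z := by
  rcases (hΩ.nonneg z).eq_or_lt with hz | hz
  · simp [hΩ.2.2 z hz.symm, hΩ.map_zero]
  have hunit : Ω ((Ω z)⁻¹ • z) ≤ 1 := by
    rw [hΩ.2.1, abs_of_pos (inv_pos.mpr hz), inv_mul_cancel₀ hz.ne']
  have hle : (Ω z)⁻¹ * (z ⬝ᵥ x) ≤ dualNorm Ω x := by
    rw [← smul_eq_mul, ← smul_dotProduct]
    exact le_csSup (dualNorm_bddAbove hΩ x) ⟨_, hunit, rfl⟩
  rw [inv_mul_le_iff₀ hz] at hle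
  linarith

end dualNorm

section normN

variable {n : ℕ}

lemma normN_nonneg (a : Fin n → ℝ) : 0 ≤ normN a := Real.sqrt_nonneg _

lemma dotProduct_self_eq_card_mul_normN_sq (a : Fin n → ℝ) : a ⬝ᵥ a = n * normN a ^ 2 := by
  rcases n.eq_zero_or_pos with rfl | hn
  · simp
  rw [normN, Real.sq_sqrt (by positivity), mul_div_cancel₀ _ (by positivity)]
  simp [dotProduct, sq]

lemma sqrt_card_mul_normN (a : Fin n → ℝ) : √n * normN a = √(∑ j, a j ^ 2) := by
  rcases n.eq_zero_or_pos with rfl | hn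
  · simp
  rw [normN, ← Real.sqrt_mul (by positivity), mul_div_cancel₀ _ (by positivity)]

lemma dotProduct_le_card_mul_normN_mul (a b : Fin n → ℝ) :
    a ⬝ᵥ b ≤ n * (normN a * normN b) := by
  calc a ⬝ᵥ b ≤ √(∑ j, a j ^ 2) * √(∑ j, b j ^ 2) := Real.sum_mul_le_sqrt_mul_sqrt _ a b
    _ = (√n * √n) * (normN a * normN b) := by
      rw [← sqrt_card_mul_normN, ← sqrt_card_mul_normN]; ring
    _ = n * (normN a * normN b) := by rw [Real.mul_self_sqrt n.cast_nonneg]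

end normN

lemma normN_noise_le_normN_residual_add {n p : ℕ} {Y ε : Fin n → ℝ}
    {X : Matrix (Fin n) (Fin p) ℝ} {β0 : Fin p → ℝ} (hY : Y = X *ᵥ β0 + ε)
    {Ω : (Fin p → ℝ) → ℝ} (hΩ : IsNorm Ω) (hε : 0 < normN ε) (β : Fin p → ℝ) :
    normN ε ≤ normN (Y - X *ᵥ β)
      + dualNorm Ω (ε ᵥ* X) / (n * normN ε) * Ω (β - β0) := by
  have hn : (0 : ℝ) < n := by
    rcases n.eq_zero_or_pos with rfl | hn
    · simp [normN] at hε
    · exact_mod_cast hn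
  have hsplit : ε ⬝ᵥ ε = ε ⬝ᵥ (Y - X *ᵥ β) + (ε ᵥ* X) ⬝ᵥ (β - β0) := by
    rw [← dotProduct_mulVec, ← dotProduct_add, hY, mulVec_sub]
    congr 1
    abel
  have hbound : n * normN ε ^ 2 ≤ n * normN ε * normN (Y - X *ᵥ β)
      + dualNorm Ω (ε ᵥ* X) * Ω (β - β0) := by
    rw [← dotProduct_self_eq_card_mul_normN_sq, hsplit, dotProduct_comm (ε ᵥ* X), mul_assoc]
    exact add_le_add (dotProduct_le_card_mul_normN_mul _ _)
      (dotProduct_le_dualNorm_mul hΩ _ _)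
  rw [div_mul_eq_mul_div, ← sub_le_iff_le_add', le_div_iff₀ (by positivity)]
  nlinarith

theorem residual_ratio_bounds_general {n p : ℕ} (Y ε : Fin n → ℝ)
    (X : Matrix (Fin n) (Fin p) ℝ) (β0 : Fin p → ℝ) (hY : Y = X.mulVec β0 + ε)
    (Ω : (Fin p → ℝ) → ℝ) (hΩ : IsNorm Ω) (lam : ℝ) (hlam : 0 < lam)
    (bh : Fin p → ℝ)
    (hmin : ∀ β : Fin p → ℝ,
      normN (Y - X.mulVec bh) + lam * Ω bh ≤ normN (Y - X.mulVec β) + lam * Ω β)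
    (f lam0 : ℝ)
    (hf : f = lam * Ω β0 / normN ε)
    (hlam0 : lam0 = dualNorm Ω (Matrix.vecMul ε X) / (n * normN ε))
    (hε : 0 < normN ε)
    (hA : (lam0 / lam) * (1 + 2 * f) < 1) :
    1 + f ≥ normN (Y - X.mulVec bh) / normN ε ∧
    normN (Y - X.mulVec bh) / normN ε
      ≥ (1 - (lam0 / lam) * (1 + 2 * f)) / (f + 2) ∧
    (1 - (lam0 / lam) * (1 + 2 * f)) / (f + 2) > 0 := by
  set R := normN (Y - X *ᵥ bh)
  set E := normN ε
  have hfE : lam * Ω β0 = f * E := by rw [hf]; field_simp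
  have hf0 : 0 ≤ f := by rw [hf]; have := hΩ.nonneg β0; positivity
  have ht0 : 0 ≤ lam0 / lam := by
    rw [hlam0]; have := dualNorm_nonneg hΩ (ε ᵥ* X); positivity
  have hbasic : R + lam * Ω bh ≤ E + lam * Ω β0 := by
    simpa [hY] using hmin β0
  have hnoise : E ≤ R + lam0 * Ω (bh - β0) :=
    hlam0 ▸ normN_noise_le_normN_residual_add hY hΩ hε bh
  have hpen : lam0 * Ω (bh - β0) ≤ lam0 / lam * (E - R + 2 * f * E) := by
    calc lam0 * Ω (bh - β0) = lam0 / lam * (lam * Ω (bh - β0)) := by field_simp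
      _ ≤ lam0 / lam * (lam * Ω bh + lam * Ω β0) := by
        rw [← mul_add]; gcongr; exact hΩ.map_sub_le bh β0
      _ ≤ lam0 / lam * (E - R + 2 * f * E) := mul_le_mul_of_nonneg_left (by linarith) ht0
  have hlow : E * (1 - lam0 / lam * (1 + 2 * f)) ≤ R := by
    nlinarith [normN_nonneg (Y - X *ᵥ bh)]
  refine ⟨?_, ?_, div_pos (by linarith) (by linarith)⟩
  · rw [ge_iff_le, div_le_iff₀ hε]
    nlinarith [hΩ.nonneg bh]
  · rw [ge_iff_le, div_le_div_iff₀ (by linarith) hε]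
    nlinarith [normN_nonneg (Y - X *ᵥ bh)]

/-- bounds on the ratio `‖ε̂‖_n / ‖ε‖_n` under Assumption I. -/
theorem residual_ratio_bounds {n p : ℕ} (Y ε : Fin n → ℝ)
    (X : Matrix (Fin n) (Fin p) ℝ) (β0 : Fin p → ℝ) (hY : Y = X.mulVec β0 + ε)
    (Ω : (Fin p → ℝ) → ℝ) (hΩ : IsNorm Ω) (lam : ℝ) (hlam : 0 < lam)
    (bh : Fin p → ℝ)
    (hmin : ∀ β : Fin p → ℝ,
      normN (Y - X.mulVec bh) + lam * Ω bh ≤ normN (Y - X.mulVec β) + lam * Ω β)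
    (f lam0 : ℝ)
    (hf : f = lam * Ω β0 / normN ε)
    (hlam0 : lam0 = dualNorm Ω (Matrix.vecMul ε X) / (n * normN ε))
    (hε : 0 < normN ε) (hεh : normN (Y - X.mulVec bh) ≠ 0)
    (hA : (lam0 / lam) * (1 + 2 * f) < 1) :
    1 + f ≥ normN (Y - X.mulVec bh) / normN ε ∧
    normN (Y - X.mulVec bh) / normN ε
      ≥ (1 - (lam0 / lam) * (1 + 2 * f)) / (f + 2) ∧
    (1 - (lam0 / lam) * (1 + 2 * f)) / (f + 2) > 0 :=
  residual_ratio_bounds_general Y ε X β0 hY Ω hΩ lam hlam bh hmin f lam0 hf hlam0 hε hA
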